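/- arXiv:2603.07014 — 2 statements merged into one kernel-verified Lean document; each statement's English description precedes it below -/
import Mathlib

section
/- Fix a, b ∈ ℝ and let ξ, ξ′ be independent standard normal random variables. Then the function ρ ↦ P(ξ ≤ a and ρξ + √(1−ρ²)ξ′ ≤ b) is strictly increasing on the interval [−1,1]. -/
open MeasureTheory ProbabilityTheory Real

/-- The standard Gaussian measure `N(0,1)` on `ℝ`. -/
noncomputable def stdGaussian : Measure ℝ := gaussianReal 0 1

open Set Filter Topology
open scoped ENNReal NNReal

namespace BivAux

instance : IsProbabilityMeasure _root_.stdGaussian := by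
  unfold _root_.stdGaussian; infer_instance

/-- The standard Gaussian density. -/
noncomputable def φd (x : ℝ) : ℝ := (Real.sqrt (2 * π))⁻¹ * rexp (-x ^ 2 / 2)

lemma φd_eq : φd = gaussianPDFReal 0 1 := by
  funext x
  simp [φd, gaussianPDFReal]

lemma φd_pos (x : ℝ) : 0 < φd x := φd_eq ▸ gaussianPDFReal_pos 0 1 x one_ne_zero

lemma φd_nonneg (x : ℝ) : 0 ≤ φd x := (φd_pos x).le

lemma continuous_φd : Continuous φd := by
  unfold φd; fun_prop

lemma one_le_sqrt_two_pi : (1 : ℝ) ≤ Real.sqrt (2 * π) := by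
  rw [show (1:ℝ) = Real.sqrt 1 by simp]
  exact Real.sqrt_le_sqrt (by nlinarith [Real.pi_gt_three])

lemma φd_le_one (x : ℝ) : φd x ≤ 1 := by
  unfold φd
  have h1 : rexp (-x ^ 2 / 2) ≤ 1 := by
    rw [Real.exp_le_one_iff]
    nlinarith [sq_nonneg x]
  have h2 : (Real.sqrt (2 * π))⁻¹ ≤ 1 := by
    rw [inv_le_one_iff₀]
    right; exact one_le_sqrt_two_pi
  calc (Real.sqrt (2 * π))⁻¹ * rexp (-x ^ 2 / 2) ≤ 1 * 1 := by
        apply mul_le_mul h2 h1 (Real.exp_nonneg _)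
        norm_num
    _ = 1 := by norm_num

lemma hasDerivAt_φd (x : ℝ) : HasDerivAt φd (-x * φd x) x := by
  have h : HasDerivAt (fun y : ℝ => -y ^ 2 / 2) (-x) x := by
    have := ((hasDerivAt_pow 2 x).neg).div_const 2
    refine this.congr_deriv ?_
    ring
  have h2 := (h.exp).const_mul ((Real.sqrt (2 * π))⁻¹)
  refine h2.congr_deriv ?_
  unfold φd; ring

lemma tendsto_φd_atBot : Tendsto φd atBot (𝓝 0) := by
  have hsq : Tendsto (fun x : ℝ => x ^ 2) atBot atTop := by
    have h2 := (tendsto_pow_atTop (by norm_num : (2:ℕ) ≠ 0)).comp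
      (tendsto_neg_atBot_atTop (G := ℝ))
    refine h2.congr fun x => ?_
    simp [Function.comp]
  have h1 : Tendsto (fun x : ℝ => -x ^ 2 / 2) atBot atBot := by
    apply Tendsto.atBot_div_const (by norm_num : (0:ℝ) < 2)
    exact tendsto_neg_atTop_atBot.comp hsq
  have h3 := (Real.tendsto_exp_atBot.comp h1).const_mul ((Real.sqrt (2 * π))⁻¹)
  rw [mul_zero] at h3
  exact h3

lemma integrable_φd : Integrable φd := φd_eq ▸ integrable_gaussianPDFReal 0 1

lemma stdGaussian_apply (s : Set ℝ) :
    _root_.stdGaussian s = ENNReal.ofReal (∫ x in s, φd x) := by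
  rw [_root_.stdGaussian, gaussianReal_apply_eq_integral 0 one_ne_zero s, φd_eq]

lemma stdGaussian_singleton (x : ℝ) : _root_.stdGaussian {x} = 0 := by
  have h := gaussianReal_absolutelyContinuous (μ := 0) (v := 1) one_ne_zero
    (Real.volume_singleton (a := x))
  simpa [_root_.stdGaussian] using h

/-- The standard Gaussian cdf. -/
noncomputable def Φc (t : ℝ) : ℝ := (_root_.stdGaussian (Iic t)).toReal

lemma Φc_eq (t : ℝ) : Φc t = ∫ x in Iic t, φd x := by
  rw [Φc, stdGaussian_apply, ENNReal.toReal_ofReal]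
  exact setIntegral_nonneg measurableSet_Iic fun x _ => φd_nonneg x

lemma hasDerivAt_Φc (t : ℝ) : HasDerivAt Φc (φd t) t := by
  have key : ∀ u : ℝ, Φc u = (∫ x in Iic (0:ℝ), φd x) + ∫ x in (0:ℝ)..u, φd x := by
    intro u
    rw [Φc_eq, ← intervalIntegral.integral_Iic_sub_Iic (integrable_φd.integrableOn)
      (integrable_φd.integrableOn)]
    ring
  have hderiv : HasDerivAt (fun u : ℝ => (∫ x in Iic (0:ℝ), φd x) + ∫ x in (0:ℝ)..u, φd x)
      (φd t) t := by
    apply HasDerivAt.const_add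
    exact intervalIntegral.integral_hasDerivAt_right
      integrable_φd.intervalIntegrable
      continuous_φd.stronglyMeasurable.stronglyMeasurableAtFilter
      continuous_φd.continuousAt
  exact hderiv.congr_of_eventuallyEq (Eventually.of_forall key)

lemma continuous_Φc : Continuous Φc :=
  continuous_iff_continuousAt.mpr fun t => (hasDerivAt_Φc t).continuousAt

lemma Φc_nonneg (t : ℝ) : 0 ≤ Φc t := ENNReal.toReal_nonneg

/-- The region in the plane. -/
def S (a b ρ : ℝ) : Set (ℝ × ℝ) :=
  {p | p.1 ≤ a ∧ ρ * p.1 + Real.sqrt (1 - ρ ^ 2) * p.2 ≤ b}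

lemma measurableSet_S (a b ρ : ℝ) : MeasurableSet (S a b ρ) := by
  have h1 : MeasurableSet {p : ℝ × ℝ | p.1 ≤ a} :=
    measurableSet_le measurable_fst measurable_const
  have h2 : MeasurableSet {p : ℝ × ℝ | ρ * p.1 + Real.sqrt (1 - ρ ^ 2) * p.2 ≤ b} :=
    measurableSet_le (by fun_prop) measurable_const
  exact h1.inter h2

/-- The two-variable probability, as a function of the correlation. -/
noncomputable def Fb (a b ρ : ℝ) : ℝ := (((_root_.stdGaussian).prod _root_.stdGaussian) (S a b ρ)).toReal

lemma prod_line_null {α β : ℝ} (b : ℝ) (h : β ≠ 0 ∨ (β = 0 ∧ α ≠ 0)) :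
    ((_root_.stdGaussian).prod _root_.stdGaussian) {p : ℝ × ℝ | α * p.1 + β * p.2 = b} = 0 := by
  have hs : MeasurableSet {p : ℝ × ℝ | α * p.1 + β * p.2 = b} := by
    have hc : Continuous fun p : ℝ × ℝ => α * p.1 + β * p.2 := by fun_prop
    exact hc.measurable (measurableSet_singleton b)
  rw [Measure.prod_apply hs]
  rcases h with hβ | ⟨hβ, hα⟩
  · have hsec : ∀ x : ℝ,
        _root_.stdGaussian (Prod.mk x ⁻¹' {p : ℝ × ℝ | α * p.1 + β * p.2 = b}) = 0 := by
      intro x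
      have hset : Prod.mk x ⁻¹' {p : ℝ × ℝ | α * p.1 + β * p.2 = b}
          = {(b - α * x) / β} := by
        ext y
        simp only [mem_preimage, mem_setOf_eq, mem_singleton_iff]
        rw [eq_div_iff hβ]
        constructor <;> intro h' <;> linarith
      rw [hset, stdGaussian_singleton]
    simp only [hsec, lintegral_zero]
  · have h0 : ∀ᵐ x ∂_root_.stdGaussian,
        _root_.stdGaussian (Prod.mk x ⁻¹' {p : ℝ × ℝ | α * p.1 + β * p.2 = b}) = 0 := by
      have hae : ∀ᵐ x ∂_root_.stdGaussian, x ≠ b / α := by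
        rw [ae_iff]
        simpa using stdGaussian_singleton (b / α)
      filter_upwards [hae] with x hx
      have hset : Prod.mk x ⁻¹' {p : ℝ × ℝ | α * p.1 + β * p.2 = b} = ∅ := by
        ext y
        simp only [mem_preimage, mem_setOf_eq, mem_empty_iff_false, iff_false, hβ, zero_mul,
          add_zero]
        intro h'
        exact hx (by field_simp; linarith)
      rw [hset]; simp
    rw [lintegral_congr_ae h0, lintegral_zero]

lemma sqrt_one_sub_sq_eq_zero {ρ : ℝ} (h : ¬ ρ ^ 2 < 1) (h' : ρ ∈ Icc (-1:ℝ) 1) :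
    Real.sqrt (1 - ρ ^ 2) = 0 := by
  have : ρ ^ 2 = 1 := le_antisymm (by nlinarith [h'.1, h'.2]) (not_lt.mp h)
  rw [this, sub_self, Real.sqrt_zero]

lemma fb_continuousOn (a b : ℝ) : ContinuousOn (Fb a b) (Icc (-1 : ℝ) 1) := by
  intro ρ₀ hρ₀
  set μ2 := (_root_.stdGaussian).prod _root_.stdGaussian with hμ2
  have hfun : Fb a b = fun ρ => ∫ p, (S a b ρ).indicator (fun _ => (1:ℝ)) p ∂μ2 := by
    funext ρ
    rw [integral_indicator (measurableSet_S a b ρ), setIntegral_const, smul_eq_mul, mul_one]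
    rfl
  rw [ContinuousWithinAt, hfun]
  -- the boundary line is null
  have hN : μ2 {p : ℝ × ℝ | ρ₀ * p.1 + Real.sqrt (1 - ρ₀ ^ 2) * p.2 = b} = 0 := by
    apply prod_line_null
    by_cases h : ρ₀ ^ 2 < 1
    · left
      exact (Real.sqrt_pos.mpr (by linarith)).ne'
    · right
      refine ⟨sqrt_one_sub_sq_eq_zero h hρ₀, fun h0 => ?_⟩
      rw [h0] at h
      simp at h
  apply tendsto_integral_filter_of_dominated_convergence (bound := fun _ => (1:ℝ))
  · exact Eventually.of_forall fun ρ =>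
      (measurable_const.indicator (measurableSet_S a b ρ)).aestronglyMeasurable
  · refine Eventually.of_forall fun ρ => Eventually.of_forall fun p => ?_
    by_cases hp : p ∈ S a b ρ <;> simp [hp]
  · exact integrable_const 1
  · -- a.e. pointwise convergence
    have hae : ∀ᵐ p ∂μ2, ρ₀ * p.1 + Real.sqrt (1 - ρ₀ ^ 2) * p.2 ≠ b := by
      rw [ae_iff]
      simpa using hN
    filter_upwards [hae] with p hp
    by_cases hp1 : p.1 ≤ a
    · have hg : Continuous fun ρ : ℝ => ρ * p.1 + Real.sqrt (1 - ρ ^ 2) * p.2 := by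
        fun_prop
      rcases lt_or_gt_of_ne hp with hlt | hgt
      · have hev : ∀ᶠ ρ in 𝓝 ρ₀, ρ * p.1 + Real.sqrt (1 - ρ ^ 2) * p.2 < b :=
          hg.continuousAt.eventually_lt_const hlt
        have hone : ∀ᶠ ρ in 𝓝 ρ₀, (S a b ρ).indicator (fun _ => (1:ℝ)) p = 1 := by
          filter_upwards [hev] with ρ h'
          exact indicator_of_mem (show p ∈ S a b ρ from ⟨hp1, h'.le⟩) _
        have htar : (S a b ρ₀).indicator (fun _ => (1:ℝ)) p = 1 :=
          indicator_of_mem (show p ∈ S a b ρ₀ from ⟨hp1, hlt.le⟩) _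
        rw [htar]
        exact (tendsto_const_nhds.congr'
          (hone.mono fun ρ h' => h'.symm)).mono_left nhdsWithin_le_nhds
      · have hev : ∀ᶠ ρ in 𝓝 ρ₀, b < ρ * p.1 + Real.sqrt (1 - ρ ^ 2) * p.2 :=
          hg.continuousAt.eventually_const_lt hgt
        have hzero : ∀ᶠ ρ in 𝓝 ρ₀, (S a b ρ).indicator (fun _ => (1:ℝ)) p = 0 := by
          filter_upwards [hev] with ρ h'
          exact indicator_of_notMem (fun hm => absurd hm.2 (not_le.mpr h')) _
        have htar : (S a b ρ₀).indicator (fun _ => (1:ℝ)) p = 0 :=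
          indicator_of_notMem (fun hm => absurd hm.2 (not_le.mpr hgt)) _
        rw [htar]
        exact (tendsto_const_nhds.congr'
          (hzero.mono fun ρ h' => h'.symm)).mono_left nhdsWithin_le_nhds
    · have hall : ∀ ρ : ℝ, (S a b ρ).indicator (fun _ => (1:ℝ)) p = 0 := fun ρ =>
        indicator_of_notMem (fun hm => hp1 hm.1) _
      rw [hall ρ₀]
      exact tendsto_const_nhds.congr fun ρ => (hall ρ).symm

lemma hasDerivAt_u {ρ : ℝ} (h : ρ ^ 2 < 1) (b x : ℝ) :
    HasDerivAt (fun ρ : ℝ => (b - ρ * x) / Real.sqrt (1 - ρ ^ 2))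
      ((ρ * b - x) / (Real.sqrt (1 - ρ ^ 2)) ^ 3) ρ := by
  have h1 : (0:ℝ) < 1 - ρ ^ 2 := by linarith
  have hc : 0 < Real.sqrt (1 - ρ ^ 2) := Real.sqrt_pos.mpr h1
  have hcsq : Real.sqrt (1 - ρ ^ 2) ^ 2 = 1 - ρ ^ 2 := Real.sq_sqrt h1.le
  have hnum : HasDerivAt (fun ρ : ℝ => b - ρ * x) (-x) ρ := by
    have := ((hasDerivAt_id ρ).mul_const x).const_sub b
    simpa using this
  have hg : HasDerivAt (fun ρ : ℝ => 1 - ρ ^ 2) (-(2 * ρ)) ρ := by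
    have := (hasDerivAt_pow 2 ρ).const_sub 1
    refine this.congr_deriv ?_
    ring
  have hden : HasDerivAt (fun ρ : ℝ => Real.sqrt (1 - ρ ^ 2))
      (1 / (2 * Real.sqrt (1 - ρ ^ 2)) * (-(2 * ρ))) ρ :=
    (Real.hasDerivAt_sqrt h1.ne').comp ρ hg
  have hdiv := hnum.div hden hc.ne'
  refine hdiv.congr_deriv ?_
  field_simp
  linear_combination (-x) * hcsq

lemma Φc_le_one (t : ℝ) : Φc t ≤ 1 := by
  have h := prob_le_one (μ := _root_.stdGaussian) (s := Iic t)
  have := ENNReal.toReal_mono ENNReal.one_ne_top h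
  simpa [Φc] using this

lemma integrable_abs_mul_φd : Integrable (fun x => |x| * φd x) := by
  have h := (integrable_rpow_mul_exp_neg_mul_sq (b := (1:ℝ)/2) one_half_pos
    (s := 1) (by norm_num)).abs
  have h2 := h.const_mul ((Real.sqrt (2 * π))⁻¹)
  apply h2.congr (Eventually.of_forall fun x => ?_)
  show (Real.sqrt (2 * π))⁻¹ * |x ^ (1:ℝ) * rexp (-(1/2) * x ^ 2)| = |x| * φd x
  rw [Real.rpow_one, abs_mul, abs_of_nonneg (Real.exp_nonneg _),
    show -(1/2 : ℝ) * x ^ 2 = -x ^ 2 / 2 by ring]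
  unfold φd
  ring

lemma integrable_linear_mul_φd (k : ℝ) : Integrable (fun x => (k + |x|) * φd x) := by
  have h1 := integrable_abs_mul_φd
  have h2 := integrable_φd.const_mul k
  exact (h2.add h1).congr (Eventually.of_forall fun x => by
    simp only [Pi.add_apply]; ring)

lemma gaussianPDF_eq_coe : gaussianPDF 0 1 = fun x => ((φd x).toNNReal : ℝ≥0∞) := by
  funext x
  rw [gaussianPDF, ← φd_eq]
  rfl

lemma setIntegral_stdGaussian (s : Set ℝ) (hs : MeasurableSet s) (g : ℝ → ℝ) :
    ∫ x in s, g x ∂_root_.stdGaussian = ∫ x in s, φd x * g x := by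
  have hres : (_root_.stdGaussian).restrict s = (volume.restrict s).withDensity (gaussianPDF 0 1) := by
    rw [_root_.stdGaussian, gaussianReal_of_var_ne_zero 0 one_ne_zero, restrict_withDensity hs]
  rw [hres, gaussianPDF_eq_coe,
    integral_withDensity_eq_integral_smul (f := fun x => (φd x).toNNReal)
      (measurable_real_toNNReal.comp continuous_φd.measurable) g]
  apply integral_congr_ae (Eventually.of_forall fun x => ?_)
  rw [NNReal.smul_def, Real.coe_toNNReal _ (φd_nonneg x), smul_eq_mul]

lemma integrable_stdGaussian_of_volume {g : ℝ → ℝ}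
    (h : Integrable (fun x => g x * φd x)) : Integrable g _root_.stdGaussian := by
  rw [_root_.stdGaussian, gaussianReal_of_var_ne_zero 0 one_ne_zero,
    integrable_withDensity_iff (measurable_gaussianPDF 0 1)
      (Eventually.of_forall fun x => ENNReal.ofReal_lt_top)]
  apply h.congr (Eventually.of_forall fun x => ?_)
  rw [gaussianPDF, ← φd_eq, ENNReal.toReal_ofReal (φd_nonneg x)]

/-- Plackett-type identity: the `ρ`-derivative integrand integrates to the joint density. -/
lemma plackett {ρ : ℝ} (h1 : (0:ℝ) < 1 - ρ ^ 2) (a b : ℝ) :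
    ∫ x in Iic a, φd x *
        (φd ((b - ρ * x) / Real.sqrt (1 - ρ ^ 2)) *
          ((ρ * b - x) / (Real.sqrt (1 - ρ ^ 2)) ^ 3))
      = φd a * φd ((b - ρ * a) / Real.sqrt (1 - ρ ^ 2)) / Real.sqrt (1 - ρ ^ 2) := by
  set c := Real.sqrt (1 - ρ ^ 2) with hc_def
  have hc : 0 < c := Real.sqrt_pos.mpr h1
  have hcsq : c ^ 2 = 1 - ρ ^ 2 := Real.sq_sqrt h1.le
  set H : ℝ → ℝ := fun x => φd x * φd ((b - ρ * x) / c) / c with hH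
  have hder : ∀ x : ℝ, HasDerivAt H
      (φd x * (φd ((b - ρ * x) / c) * ((ρ * b - x) / c ^ 3))) x := by
    intro x
    have hu : HasDerivAt (fun x : ℝ => (b - ρ * x) / c) (-ρ / c) x := by
      have : HasDerivAt (fun x : ℝ => b - ρ * x) (-ρ) x := by
        have := ((hasDerivAt_id x).const_mul ρ).const_sub b
        simpa using this
      exact this.div_const c
    have hprod := (hasDerivAt_φd x).mul
      (((hasDerivAt_φd ((b - ρ * x) / c)).comp x hu))
    have hdiv := hprod.div_const c
    refine hdiv.congr_deriv ?_
    simp only [Function.comp_apply]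
    field_simp
    linear_combination (-(φd x * φd ((b - x * ρ) / c) * x)) * hcsq
  have hint : IntegrableOn
      (fun x => φd x * (φd ((b - ρ * x) / c) * ((ρ * b - x) / c ^ 3))) (Iic a) := by
    apply (Integrable.integrableOn ?_)
    have hb := (integrable_linear_mul_φd |ρ * b|).div_const (c ^ 3)
    apply hb.mono' ?_ (Eventually.of_forall fun x => ?_)
    · exact (continuous_φd.mul ((continuous_φd.comp (by fun_prop)).mul
        (by fun_prop))).aestronglyMeasurable
    · have hc3 : (0:ℝ) < c ^ 3 := by positivity
      rw [Real.norm_eq_abs, abs_mul, abs_mul, abs_of_nonneg (φd_nonneg x),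
        abs_of_nonneg (φd_nonneg _), abs_div, abs_of_nonneg hc3.le]
      have habs : |ρ * b - x| ≤ |ρ * b| + |x| := by
        calc |ρ * b - x| ≤ |ρ * b| + |(-x)| := by
              rw [sub_eq_add_neg]; exact abs_add_le _ _
          _ = |ρ * b| + |x| := by rw [abs_neg]
      calc φd x * (φd ((b - ρ * x) / c) * (|ρ * b - x| / c ^ 3))
          ≤ φd x * (1 * ((|ρ * b| + |x|) / c ^ 3)) := by
            apply mul_le_mul_of_nonneg_left ?_ (φd_nonneg x)
            apply mul_le_mul (φd_le_one _) ?_ (by positivity) zero_le_one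
            gcongr
        _ = (|ρ * b| + |x|) * φd x / c ^ 3 := by ring
  have htend : Tendsto H atBot (𝓝 0) := by
    apply tendsto_of_tendsto_of_tendsto_of_le_of_le (g := fun _ : ℝ => (0:ℝ))
      (h := fun x => φd x * (1 / c)) tendsto_const_nhds ?_ ?_ ?_
    · have := tendsto_φd_atBot.mul_const (1 / c)
      simpa using this
    · intro x
      show (0:ℝ) ≤ φd x * φd ((b - ρ * x) / c) / c
      have := φd_nonneg x
      have := φd_nonneg ((b - ρ * x) / c)
      positivity
    · intro x
      show φd x * φd ((b - ρ * x) / c) / c ≤ φd x * (1 * c⁻¹)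
      rw [mul_div_assoc, div_eq_mul_inv]
      apply mul_le_mul_of_nonneg_left ?_ (φd_nonneg x)
      exact mul_le_mul_of_nonneg_right (φd_le_one _) (by positivity)
  have := integral_Iic_of_hasDerivAt_of_tendsto' (a := a)
    (fun x _ => hder x) hint htend
  rw [this, sub_zero]

lemma fb_eq_integral {a b ρ : ℝ} (hρ : ρ ∈ Ioo (-1:ℝ) 1) :
    Fb a b ρ = ∫ x, (Iic a).indicator
      (fun x => Φc ((b - ρ * x) / Real.sqrt (1 - ρ ^ 2))) x ∂_root_.stdGaussian := by
  have h1 : (0:ℝ) < 1 - ρ ^ 2 := by nlinarith [hρ.1, hρ.2]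
  have hc : 0 < Real.sqrt (1 - ρ ^ 2) := Real.sqrt_pos.mpr h1
  have hsec : ∀ x : ℝ, _root_.stdGaussian (Prod.mk x ⁻¹' S a b ρ)
      = (Iic a).indicator
          (fun x => _root_.stdGaussian (Iic ((b - ρ * x) / Real.sqrt (1 - ρ ^ 2)))) x := by
    intro x
    by_cases hx : x ∈ Iic a
    · rw [indicator_of_mem hx]
      congr 1
      ext y
      simp only [mem_preimage, S, mem_setOf_eq, mem_Iic]
      rw [and_iff_right (show x ≤ a from hx)]
      rw [le_div_iff₀ hc]
      constructor <;> intro <;> linarith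
    · rw [indicator_of_notMem hx]
      have hempty : Prod.mk x ⁻¹' S a b ρ = ∅ := by
        ext y
        simp only [mem_preimage, S, mem_setOf_eq, mem_empty_iff_false, iff_false]
        exact fun h => hx h.1
      rw [hempty]
      simp
  have hm : AEMeasurable (fun x => _root_.stdGaussian (Prod.mk x ⁻¹' S a b ρ)) _root_.stdGaussian :=
    (measurable_measure_prodMk_left (measurableSet_S a b ρ)).aemeasurable
  rw [Fb, Measure.prod_apply (measurableSet_S a b ρ),
    ← integral_toReal hm (Eventually.of_forall fun x => measure_lt_top _ _)]
  apply integral_congr_ae (Eventually.of_forall fun x => ?_)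
  rw [hsec x]
  by_cases hx : x ∈ Iic a
  · rw [indicator_of_mem hx, indicator_of_mem hx]
    rfl
  · rw [indicator_of_notMem hx, indicator_of_notMem hx]
    rfl

/-- The inner integrand, as a function of the correlation. -/
noncomputable def Wfun (a b ρ x : ℝ) : ℝ :=
  (Iic a).indicator (fun x => Φc ((b - ρ * x) / Real.sqrt (1 - ρ ^ 2))) x

/-- Its `ρ`-derivative. -/
noncomputable def Wfun' (a b ρ x : ℝ) : ℝ :=
  (Iic a).indicator (fun x => φd ((b - ρ * x) / Real.sqrt (1 - ρ ^ 2)) *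
    ((ρ * b - x) / (Real.sqrt (1 - ρ ^ 2)) ^ 3)) x

lemma wfun_aesm (a b ρ : ℝ) : AEStronglyMeasurable (Wfun a b ρ) _root_.stdGaussian := by
  have hcont : Continuous fun x => Φc ((b - ρ * x) / Real.sqrt (1 - ρ ^ 2)) :=
    continuous_Φc.comp (by fun_prop)
  exact (hcont.measurable.indicator measurableSet_Iic).aestronglyMeasurable

lemma wfun'_aesm (a b ρ : ℝ) : AEStronglyMeasurable (Wfun' a b ρ) _root_.stdGaussian := by
  have hcont : Continuous fun x => φd ((b - ρ * x) / Real.sqrt (1 - ρ ^ 2)) *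
      ((ρ * b - x) / (Real.sqrt (1 - ρ ^ 2)) ^ 3) :=
    (continuous_φd.comp (by fun_prop)).mul (by fun_prop)
  exact (hcont.measurable.indicator measurableSet_Iic).aestronglyMeasurable

lemma fb_hasDerivAt {a b ρ₀ : ℝ} (hρ : ρ₀ ∈ Ioo (-1 : ℝ) 1) :
    HasDerivAt (Fb a b)
      (φd a * φd ((b - ρ₀ * a) / Real.sqrt (1 - ρ₀ ^ 2)) / Real.sqrt (1 - ρ₀ ^ 2)) ρ₀ := by
  obtain ⟨hρ1, hρ2⟩ := hρ
  have habs : |ρ₀| < 1 := abs_lt.mpr ⟨hρ1, hρ2⟩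
  have habs0 : (0:ℝ) ≤ |ρ₀| := abs_nonneg _
  set ε : ℝ := (1 - |ρ₀|) / 2 with hε
  set r : ℝ := (1 + |ρ₀|) / 2 with hr
  have hεpos : 0 < ε := by rw [hε]; linarith
  have hr1 : r < 1 := by rw [hr]; linarith
  have hr0 : 0 ≤ r := by rw [hr]; linarith
  have hrsq : r ^ 2 < 1 := by nlinarith
  have hcr : 0 < Real.sqrt (1 - r ^ 2) := Real.sqrt_pos.mpr (by linarith)
  have hball : ∀ ρ ∈ Metric.ball ρ₀ ε, |ρ| ≤ r := by
    intro ρ hmem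
    rw [Metric.mem_ball, Real.dist_eq] at hmem
    have h2 : |ρ| ≤ |ρ - ρ₀| + |ρ₀| := by
      calc |ρ| = |ρ - ρ₀ + ρ₀| := by ring_nf
        _ ≤ |ρ - ρ₀| + |ρ₀| := abs_add_le _ _
    rw [hr]; rw [hε] at hmem
    linarith
  have hsqlt : ∀ ρ ∈ Metric.ball ρ₀ ε, ρ ^ 2 < 1 := by
    intro ρ hmem
    have h := hball ρ hmem
    nlinarith [abs_nonneg ρ, sq_abs ρ]
  have hcle : ∀ ρ ∈ Metric.ball ρ₀ ε, Real.sqrt (1 - r ^ 2) ≤ Real.sqrt (1 - ρ ^ 2) := by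
    intro ρ hmem
    apply Real.sqrt_le_sqrt
    have h := hball ρ hmem
    nlinarith [sq_abs ρ, abs_nonneg ρ]
  -- hypotheses of the dominated-derivative theorem
  have hmeas : ∀ᶠ ρ in 𝓝 ρ₀, AEStronglyMeasurable (Wfun a b ρ) _root_.stdGaussian :=
    Eventually.of_forall fun ρ => wfun_aesm a b ρ
  have hint : Integrable (Wfun a b ρ₀) _root_.stdGaussian := by
    apply (integrable_const (1:ℝ)).mono' (wfun_aesm a b ρ₀)
      (Eventually.of_forall fun x => ?_)
    rw [Real.norm_eq_abs]
    unfold Wfun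
    by_cases hx : x ∈ Iic a
    · rw [indicator_of_mem hx, abs_of_nonneg (Φc_nonneg _)]
      exact Φc_le_one _
    · rw [indicator_of_notMem hx]
      simp
  have hbound : ∀ᵐ x ∂_root_.stdGaussian, ∀ ρ ∈ Metric.ball ρ₀ ε,
      ‖Wfun' a b ρ x‖ ≤ (|b| + |x|) / Real.sqrt (1 - r ^ 2) ^ 3 := by
    refine Eventually.of_forall fun x => fun ρ hmem => ?_
    have hsq := hsqlt ρ hmem
    have hc : 0 < Real.sqrt (1 - ρ ^ 2) := Real.sqrt_pos.mpr (by linarith)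
    have hc3 : (0:ℝ) < Real.sqrt (1 - ρ ^ 2) ^ 3 := by positivity
    have hcr3 : (0:ℝ) < Real.sqrt (1 - r ^ 2) ^ 3 := by positivity
    rw [Real.norm_eq_abs]
    unfold Wfun'
    by_cases hx : x ∈ Iic a
    · rw [indicator_of_mem hx, abs_mul, abs_of_nonneg (φd_nonneg _), abs_div,
        abs_of_nonneg hc3.le]
      have hnum : |ρ * b - x| ≤ |b| + |x| := by
        have h2 : |ρ * b - x| ≤ |ρ * b| + |x| := by
          calc |ρ * b - x| ≤ |ρ * b| + |(-x)| := by
                rw [sub_eq_add_neg]; exact abs_add_le _ _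
            _ = |ρ * b| + |x| := by rw [abs_neg]
        have h3 : |ρ * b| ≤ |b| := by
          rw [abs_mul]
          calc |ρ| * |b| ≤ 1 * |b| :=
                mul_le_mul_of_nonneg_right (le_trans (hball ρ hmem) hr1.le) (abs_nonneg b)
            _ = |b| := one_mul _
        linarith
      have hden : Real.sqrt (1 - r ^ 2) ^ 3 ≤ Real.sqrt (1 - ρ ^ 2) ^ 3 :=
        pow_le_pow_left₀ hcr.le (hcle ρ hmem) 3
      calc φd ((b - ρ * x) / Real.sqrt (1 - ρ ^ 2)) *
            (|ρ * b - x| / Real.sqrt (1 - ρ ^ 2) ^ 3)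
          ≤ 1 * ((|b| + |x|) / Real.sqrt (1 - r ^ 2) ^ 3) := by
            apply mul_le_mul (φd_le_one _) ?_ (by positivity) zero_le_one
            exact div_le_div₀ (by positivity) hnum hcr3 hden
        _ = (|b| + |x|) / Real.sqrt (1 - r ^ 2) ^ 3 := one_mul _
    · rw [indicator_of_notMem hx, abs_zero]
      positivity
  have hbint : Integrable (fun x => (|b| + |x|) / Real.sqrt (1 - r ^ 2) ^ 3) _root_.stdGaussian := by
    apply integrable_stdGaussian_of_volume
    apply ((integrable_linear_mul_φd |b|).div_const (Real.sqrt (1 - r ^ 2) ^ 3)).congr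
    exact Eventually.of_forall fun x => by ring
  have hdiff : ∀ᵐ x ∂_root_.stdGaussian, ∀ ρ ∈ Metric.ball ρ₀ ε,
      HasDerivAt (fun ρ => Wfun a b ρ x) (Wfun' a b ρ x) ρ := by
    refine Eventually.of_forall fun x => fun ρ hmem => ?_
    have hsq := hsqlt ρ hmem
    unfold Wfun Wfun'
    by_cases hx : x ∈ Iic a
    · simp only [indicator_of_mem hx]
      exact (hasDerivAt_Φc _).comp ρ (hasDerivAt_u hsq b x)
    · simp only [indicator_of_notMem hx]
      exact hasDerivAt_const ρ 0
  have key := hasDerivAt_integral_of_dominated_loc_of_deriv_le (Metric.ball_mem_nhds ρ₀ hεpos) hmeas hint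
    (wfun'_aesm a b ρ₀) hbound hbint hdiff
  have heq : (Fb a b) =ᶠ[𝓝 ρ₀] fun ρ => ∫ x, Wfun a b ρ x ∂_root_.stdGaussian := by
    filter_upwards [Ioo_mem_nhds hρ1 hρ2] with ρ hmem
    exact fb_eq_integral hmem
  have hF : HasDerivAt (Fb a b) (∫ x, Wfun' a b ρ₀ x ∂_root_.stdGaussian) ρ₀ :=
    key.2.congr_of_eventuallyEq heq
  have h1 : (0:ℝ) < 1 - ρ₀ ^ 2 := by nlinarith
  have hval : ∫ x, Wfun' a b ρ₀ x ∂_root_.stdGaussian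
      = φd a * φd ((b - ρ₀ * a) / Real.sqrt (1 - ρ₀ ^ 2)) / Real.sqrt (1 - ρ₀ ^ 2) := by
    unfold Wfun'
    rw [integral_indicator measurableSet_Iic,
      setIntegral_stdGaussian _ measurableSet_Iic]
    exact plackett h1 a b
  exact hval ▸ hF

lemma fb_strictMonoOn (a b : ℝ) : StrictMonoOn (Fb a b) (Icc (-1 : ℝ) 1) := by
  apply strictMonoOn_of_deriv_pos (convex_Icc _ _) (fb_continuousOn a b)
  intro ρ hρ
  rw [interior_Icc] at hρ
  have h1 : (0:ℝ) < 1 - ρ ^ 2 := by nlinarith [hρ.1, hρ.2]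
  have hc : 0 < Real.sqrt (1 - ρ ^ 2) := Real.sqrt_pos.mpr h1
  rw [(fb_hasDerivAt (a := a) (b := b) hρ).deriv]
  exact div_pos (mul_pos (φd_pos _) (φd_pos _)) hc

end BivAux

/-- Fix `a b : ℝ` and let `ξ, ξ'` be independent standard normal random
variables.  Then `ρ ↦ P(ξ ≤ a ∧ ρ ξ + √(1−ρ²) ξ' ≤ b)` is strictly increasing on `[−1,1]`. -/
theorem bivariate_gaussian_cdf_strictMonoOn_corr
    {Ω : Type*} [MeasureSpace Ω] (hP : IsProbabilityMeasure (ℙ : Measure Ω))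
    (a b : ℝ) (ξ ξ' : Ω → ℝ)
    (hξ : Measure.map ξ ℙ = _root_.stdGaussian)
    (hξ' : Measure.map ξ' ℙ = _root_.stdGaussian)
    (hindep : IndepFun ξ ξ' ℙ) :
    StrictMonoOn
      (fun ρ : ℝ =>
        (ℙ {ω | ξ ω ≤ a ∧ ρ * ξ ω + Real.sqrt (1 - ρ ^ 2) * ξ' ω ≤ b}).toReal)
      (Set.Icc (-1 : ℝ) 1) := by
  have hξm : AEMeasurable ξ ℙ := aemeasurable_of_map_neZero (by rw [hξ]; infer_instance)
  have hξ'm : AEMeasurable ξ' ℙ := aemeasurable_of_map_neZero (by rw [hξ']; infer_instance)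
  have hmap : Measure.map (fun ω => (ξ ω, ξ' ω)) ℙ = (_root_.stdGaussian).prod _root_.stdGaussian := by
    rw [(indepFun_iff_map_prod_eq_prod_map_map hξm hξ'm).mp hindep, hξ, hξ']
  have hfun : (fun ρ : ℝ =>
      (ℙ {ω | ξ ω ≤ a ∧ ρ * ξ ω + Real.sqrt (1 - ρ ^ 2) * ξ' ω ≤ b}).toReal)
      = BivAux.Fb a b := by
    funext ρ
    have hpre : {ω | ξ ω ≤ a ∧ ρ * ξ ω + Real.sqrt (1 - ρ ^ 2) * ξ' ω ≤ b}
        = (fun ω => (ξ ω, ξ' ω)) ⁻¹' (BivAux.S a b ρ) := rfl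
    rw [hpre, ← Measure.map_apply_of_aemeasurable (hξm.prodMk hξ'm)
      (BivAux.measurableSet_S a b ρ), hmap]
    rfl
  rw [hfun]
  exact BivAux.fb_strictMonoOn a b
end

section
/- Let A > 0 and D > 0 be real numbers and set F(ρ) = 4 − 2A√(1+ρ) − 2D√(1−ρ) for ρ ∈ [−1,1], and ρ* = (A² − D²)/(A² + D²). Then for every ρ ∈ [−1,1], F(ρ) − F(ρ*) ≥ ((A + D)/2^{7/2}) (ρ − ρ*)². -/
open Real

set_option maxHeartbeats 1000000 in
/-- For `A, D > 0`, `F(ρ) = 4 − 2A√(1+ρ) − 2D√(1−ρ)` on `[−1,1]` and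
`ρ* = (A²−D²)/(A²+D²)`, we have the quadratic growth bound
`F(ρ) − F(ρ*) ≥ ((A+D)/2^{7/2}) (ρ−ρ*)²` for every `ρ ∈ [−1,1]`. -/
theorem bivariate_objective_quadratic_growth (A D : ℝ) (hA : 0 < A) (hD : 0 < D) :
    ∀ ρ ∈ Set.Icc (-1 : ℝ) 1,
      (4 - 2 * A * Real.sqrt (1 + ρ) - 2 * D * Real.sqrt (1 - ρ)) -
        (4 - 2 * A * Real.sqrt (1 + (A ^ 2 - D ^ 2) / (A ^ 2 + D ^ 2)) -
          2 * D * Real.sqrt (1 - (A ^ 2 - D ^ 2) / (A ^ 2 + D ^ 2))) ≥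
      ((A + D) / (2 : ℝ) ^ ((7 : ℝ) / 2)) * (ρ - (A ^ 2 - D ^ 2) / (A ^ 2 + D ^ 2)) ^ 2 := by
  rintro ρ ⟨h1, h2⟩
  have hs : (0:ℝ) < A ^ 2 + D ^ 2 := by positivity
  set t : ℝ := Real.sqrt (2 * (A ^ 2 + D ^ 2)) with ht_def
  have ht0 : 0 < t := Real.sqrt_pos.mpr (by positivity)
  have ht2 : t ^ 2 = 2 * (A ^ 2 + D ^ 2) := Real.sq_sqrt (by positivity)
  set u : ℝ := Real.sqrt (1 + ρ) with hu_def
  set v : ℝ := Real.sqrt (1 - ρ) with hv_def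
  have hu0 : 0 ≤ u := Real.sqrt_nonneg _
  have hv0 : 0 ≤ v := Real.sqrt_nonneg _
  have hu2 : u ^ 2 = 1 + ρ := Real.sq_sqrt (by linarith)
  have hv2 : v ^ 2 = 1 - ρ := Real.sq_sqrt (by linarith)
  -- values of the square roots at ρ*
  have hA' : Real.sqrt (1 + (A ^ 2 - D ^ 2) / (A ^ 2 + D ^ 2))
      = A * t / (A ^ 2 + D ^ 2) := by
    have e1 : 1 + (A ^ 2 - D ^ 2) / (A ^ 2 + D ^ 2)
        = (A * t / (A ^ 2 + D ^ 2)) ^ 2 := by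
      field_simp
      linear_combination (-(A ^ 2)) * ht2
    rw [e1, Real.sqrt_sq (by positivity)]
  have hD' : Real.sqrt (1 - (A ^ 2 - D ^ 2) / (A ^ 2 + D ^ 2))
      = D * t / (A ^ 2 + D ^ 2) := by
    have e1 : 1 - (A ^ 2 - D ^ 2) / (A ^ 2 + D ^ 2)
        = (D * t / (A ^ 2 + D ^ 2)) ^ 2 := by
      field_simp
      linear_combination (-(D ^ 2)) * ht2
    rw [e1, Real.sqrt_sq (by positivity)]
  rw [hA', hD']
  -- the constant
  have hsq2 : Real.sqrt 2 ^ 2 = 2 := Real.sq_sqrt (by norm_num)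
  have hsq2pos : 0 < Real.sqrt 2 := Real.sqrt_pos.mpr (by norm_num)
  have hsq2le : Real.sqrt 2 ≤ 3/2 := by
    nlinarith [hsq2, hsq2pos]
  have hc : (A + D) / (2:ℝ) ^ ((7:ℝ)/2) = (A + D) * Real.sqrt 2 / 16 := by
    have h27 : ((2:ℝ) ^ ((7:ℝ)/2)) = 8 * Real.sqrt 2 := by
      have hsq : ((2:ℝ) ^ ((7:ℝ)/2)) ^ 2 = 128 := by
        rw [← Real.rpow_natCast ((2:ℝ) ^ ((7:ℝ)/2)) 2, ← Real.rpow_mul (by norm_num)]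
        norm_num
      have hpos : (0:ℝ) < (2:ℝ) ^ ((7:ℝ)/2) :=
        Real.rpow_pos_of_pos (by norm_num) _
      nlinarith [hsq, hpos, hsq2, hsq2pos]
    rw [h27, div_eq_div_iff (by positivity) (by norm_num)]
    linear_combination (-8) * (A + D) * hsq2
  rw [hc]
  set c : ℝ := (A + D) * Real.sqrt 2 / 16 with hc_def
  have hc0 : 0 ≤ c := by positivity
  -- rewrite ρ − ρ*
  have hρ : ρ - (A ^ 2 - D ^ 2) / (A ^ 2 + D ^ 2)
      = ((D * u - A * v) * (D * u + A * v)) / (A ^ 2 + D ^ 2) := by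
    have hρ' : (D * u - A * v) * (D * u + A * v)
        = ρ * (A ^ 2 + D ^ 2) - (A ^ 2 - D ^ 2) := by
      linear_combination D ^ 2 * hu2 - A ^ 2 * hv2
    rw [hρ']
    field_simp
  rw [hρ]
  -- key inequalities
  have h_tw : A * u + D * v ≤ t := by
    nlinarith [sq_nonneg (D * u - A * v), hu2, hv2, ht2, ht0,
      mul_nonneg (mul_nonneg hA.le hu0) (mul_nonneg hD.le hv0)]
  have hd0 : 0 ≤ t - (A * u + D * v) := by linarith
  have h_e2 : (D * u - A * v) ^ 2
      = (t - (A * u + D * v)) * (t + (A * u + D * v)) := by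
    linear_combination (A ^ 2 + D ^ 2) * hu2 + (A ^ 2 + D ^ 2) * hv2 - ht2
  have h_m2 : (D * u + A * v) ^ 2 ≤ t ^ 2 := by
    nlinarith [sq_nonneg (A * u - D * v), hu2, hv2, ht2]
  have h_AD : A + D ≤ t := by
    nlinarith [sq_nonneg (A - D), ht2, ht0]
  have hct : 2 * c * t ≤ A ^ 2 + D ^ 2 := by
    have hb1 : (A + D) * Real.sqrt 2 ≤ t * (3/2) :=
      mul_le_mul h_AD hsq2le hsq2pos.le ht0.le
    have hb2 : (A + D) * Real.sqrt 2 * t ≤ t * (3/2) * t :=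
      mul_le_mul_of_nonneg_right hb1 ht0.le
    have : 2 * c * t = (A + D) * Real.sqrt 2 * t / 8 := by rw [hc_def]; ring
    rw [this]
    nlinarith [hb2, ht2, hs]
  have h4 : c * t ^ 3 ≤ (A ^ 2 + D ^ 2) ^ 2 := by
    have e4 : c * t ^ 3 = (2 * c * t) * (A ^ 2 + D ^ 2) := by
      linear_combination c * t * ht2
    rw [e4]
    nlinarith [hct, hs]
  -- main polynomial inequality
  have step1 : c * ((D * u - A * v) ^ 2 * (D * u + A * v) ^ 2)
      ≤ c * ((D * u - A * v) ^ 2 * t ^ 2) :=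
    mul_le_mul_of_nonneg_left
      (mul_le_mul_of_nonneg_left h_m2 (sq_nonneg _)) hc0
  have step2 : c * ((D * u - A * v) ^ 2 * t ^ 2)
      ≤ 2 * c * t ^ 3 * (t - (A * u + D * v)) := by
    rw [h_e2]
    nlinarith [mul_nonneg (mul_nonneg hc0 (sq_nonneg t))
      (sq_nonneg (t - (A * u + D * v)))]
  have step3 : 2 * c * t ^ 3 * (t - (A * u + D * v))
      ≤ (2 * t - 2 * (A * u + D * v)) * (A ^ 2 + D ^ 2) ^ 2 := by
    nlinarith [mul_nonneg hd0 (sub_nonneg.mpr h4)]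
  have hfinal : c * (((D * u - A * v) * (D * u + A * v)) / (A ^ 2 + D ^ 2)) ^ 2
      ≤ 2 * t - 2 * (A * u + D * v) := by
    rw [div_pow, ← mul_div_assoc, div_le_iff₀ (by positivity : (0:ℝ) < (A ^ 2 + D ^ 2) ^ 2)]
    have : c * ((D * u - A * v) * (D * u + A * v)) ^ 2
        = c * ((D * u - A * v) ^ 2 * (D * u + A * v) ^ 2) := by ring
    rw [this]
    linarith [step1, step2, step3]
  -- F(ρ*) part
  have h2t : 2 * A * (A * t / (A ^ 2 + D ^ 2)) + 2 * D * (D * t / (A ^ 2 + D ^ 2))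
      = 2 * t := by
    field_simp
  linarith [hfinal, h2t]
end
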